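/- Let $K$ be a field of characteristic $0$. If $\Phi_1, \dots, \Phi_t \in K[X]$ are monic polynomials each dividing $X^{\delta_i} - 1$ for positive integers $\delta_i$, then the support of the product $\prod_{i=1}^t \Phi_i$ is symmetric: letting $n = \sum_i \deg \Phi_i$, for every $0 \le s \le n$, the coefficient of $X^s$ in the product is nonzero if and only if the coefficient of $X^{n-s}$ is nonzero. -/

import Mathlib

/-!
A monic divisor of a product of polynomials `X ^ δ - 1` has coefficients integral over `ℚ`, so
it descends to the algebraic closure of `ℚ` in `K` and can be embedded into `ℂ` without changing
its support. There every root `r` is a root of unity, so `conj r = r⁻¹`; hence the reversed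
polynomial `X ^ n P(1/X)` is a nonzero constant times the coefficientwise conjugate of `P`, and
the coefficient of `X ^ (n - s)` is a nonzero multiple of the conjugate of that of `X ^ s`.
-/

open Polynomial

namespace Polynomial

theorem reverse_X_sub_C {R : Type*} [CommRing R] (a : R) :
    (X - C a).reverse = 1 - C a * X := by
  nontriviality R
  rw [sub_eq_add_neg, ← C_neg, reverse_add_C, natDegree_X, pow_one, C_neg, neg_mul,
    ← sub_eq_add_neg, ← mul_one (X : R[X]), reverse_X_mul, ← C_1, reverse_C]

theorem reverse_multiset_prod {R : Type*} [CommSemiring R] [NoZeroDivisors R]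
    (m : Multiset R[X]) : m.prod.reverse = (m.map reverse).prod := by
  induction m using Multiset.induction_on with
  | empty => simpa using reverse_C (1 : R)
  | cons p m ih => simp [reverse_mul_of_domain, ih]

theorem coeff_natDegree_sub_ne_zero_iff_of_reverse_eq {R : Type*} [DivisionRing R]
    {P : R[X]} {c : R} (hc : c ≠ 0) (f : R →+* R) (h : P.reverse = C c * P.map f) {s : ℕ}
    (hs : s ≤ P.natDegree) : P.coeff (P.natDegree - s) ≠ 0 ↔ P.coeff s ≠ 0 := by
  have coeff_rev : ∀ k ≤ P.natDegree, P.coeff (P.natDegree - k) = c * f (P.coeff k) := by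
    intro k hk
    rw [← revAt_le hk, ← coeff_reverse, h, coeff_C_mul, coeff_map]
  have ne_zero_iff : ∀ x : R, c * f x ≠ 0 ↔ x ≠ 0 := fun x => by simp [hc]
  refine ⟨fun hrev => ?_, fun hcoeff => by rwa [coeff_rev s hs, ne_zero_iff]⟩
  have := coeff_rev (P.natDegree - s) (Nat.sub_le _ _)
  rw [Nat.sub_sub_self hs] at this
  rwa [this, ne_zero_iff]

end Polynomial

theorem Complex.reverse_X_sub_C_of_norm_eq_one {r : ℂ} (hr : ‖r‖ = 1) :
    (X - C r).reverse = C (-r) * (X - C r).map (starRingEnd ℂ) := by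
  have hr0 : r ≠ 0 := by rintro rfl; simp at hr
  rw [reverse_X_sub_C, Polynomial.map_sub, map_X, map_C, ← inv_eq_conj hr, C_neg]
  have : C r * C r⁻¹ = (1 : ℂ[X]) := by rw [← C_mul, mul_inv_cancel₀ hr0, C_1]
  linear_combination -this

theorem Complex.exists_reverse_eq_C_mul_map_conj {P : ℂ[X]} (hP : P.Monic)
    (hroots : ∀ r ∈ P.roots, ‖r‖ = 1) :
    ∃ c ≠ 0, P.reverse = C c * P.map (starRingEnd ℂ) := by
  have hprod : (P.roots.map fun r => X - C r).prod = P :=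
    ((IsAlgClosed.splits P).eq_prod_roots_of_monic hP).symm
  refine ⟨(P.roots.map fun r => -r).prod, ?_, ?_⟩
  · refine Multiset.prod_ne_zero fun h0 => ?_
    obtain ⟨r, hr, hr0⟩ := Multiset.mem_map.1 h0
    simpa [neg_eq_zero.1 hr0] using hroots r hr
  · calc P.reverse = ((P.roots.map fun r => X - C r).prod).reverse := by rw [hprod]
      _ = (P.roots.map fun r => (X - C r).reverse).prod := by
        rw [reverse_multiset_prod, Multiset.map_map]; rfl
      _ = (P.roots.map fun r => C (-r) * (X - C r).map (starRingEnd ℂ)).prod :=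
        congrArg _ <| Multiset.map_congr rfl fun r hr =>
          reverse_X_sub_C_of_norm_eq_one (hroots r hr)
      _ = C (P.roots.map fun r => -r).prod *
          ((P.roots.map fun r => X - C r).prod).map (starRingEnd ℂ) := by
        rw [Multiset.prod_map_mul, map_multiset_prod C, Polynomial.map_multiset_prod,
          Multiset.map_map, Multiset.map_map]; rfl
      _ = C (P.roots.map fun r => -r).prod * P.map (starRingEnd ℂ) := by rw [hprod]

theorem Complex.norm_eq_one_of_mem_roots_of_dvd_prod_X_pow_sub_one {ι : Type*}
    [Fintype ι] {δ : ι → ℕ} (hδ : ∀ i, 0 < δ i) {Q : ℂ[X]} (hQ : Q ∣ ∏ i, (X ^ δ i - 1))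
    {r : ℂ} (hr : r ∈ Q.roots) : ‖r‖ = 1 := by
  have hne : (∏ i, (X ^ δ i - 1 : ℂ[X])) ≠ 0 :=
    Finset.prod_ne_zero_iff.2 fun i _ => X_pow_sub_C_ne_zero (hδ i) 1
  have hroot := (mem_roots hne).1 (Multiset.mem_of_le (roots.le_of_dvd hne hQ) hr)
  rw [IsRoot.def, eval_prod, Finset.prod_eq_zero_iff] at hroot
  obtain ⟨i, -, hi⟩ := hroot
  refine norm_eq_one_of_pow_eq_one ?_ (hδ i).ne'
  simpa [sub_eq_zero] using hi

theorem exists_complex_monic_dvd_map_support_eq {K : Type*} [Field K] [CharZero K]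
    {F : ℚ[X]} (hF : F.Monic) {P : K[X]} (hP : P.Monic) (hPF : P ∣ F.map (algebraMap ℚ K)) :
    ∃ Q : ℂ[X], Q.Monic ∧ Q ∣ F.map (algebraMap ℚ ℂ) ∧ Q.support = P.support := by
  let L := algebraicClosure ℚ K
  have hlift : P ∈ lifts (algebraMap L K) := (lifts_iff_coeff_lifts P).2 fun k => by
    obtain ⟨x, hx⟩ := (lifts_iff_coeff_lifts P).1
      (integralClosure.mem_lifts_of_monic_of_dvd_map K hF hP hPF) k
    exact ⟨⟨_, mem_algebraicClosure_iff'.2 x.2⟩, hx⟩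
  obtain ⟨P₀, hP₀, -, hP₀m⟩ := lifts_and_degree_eq_and_monic hlift hP
  have hP₀F : P₀ ∣ F.map (algebraMap ℚ L) := by
    rwa [← map_dvd_map _ (algebraMap L K).injective hP₀m, hP₀, Polynomial.map_map,
      ← IsScalarTower.algebraMap_eq]
  have : Algebra.IsAlgebraic ℚ L := algebraicClosure.isAlgebraic ℚ K
  let χ : L →ₐ[ℚ] ℂ := IsAlgClosed.lift
  refine ⟨P₀.map χ, hP₀m.map _, ?_, ?_⟩
  · simpa [Polynomial.map_map] using Polynomial.map_dvd (χ : L →+* ℂ) hP₀F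
  · rw [← hP₀, support_map_of_injective _ (algebraMap L K).injective,
      support_map_of_injective _ (χ : L →+* ℂ).injective]

theorem stmt19 {K : Type*} [Field K] [CharZero K] (t : ℕ)
    (Φ : Fin t → Polynomial K) (δ : Fin t → ℕ)
    (hmonic : ∀ i, (Φ i).Monic) (hδ : ∀ i, 0 < δ i)
    (hdvd : ∀ i, Φ i ∣ Polynomial.X ^ (δ i) - 1)
    (n : ℕ) (hn : n = ∑ i, (Φ i).natDegree)
    (s : ℕ) (hs : s ≤ n) :
    (∏ i, Φ i).coeff s ≠ 0 ↔ (∏ i, Φ i).coeff (n - s) ≠ 0 := by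
  set P := ∏ i, Φ i
  have hP : P.Monic := monic_prod_of_monic _ _ fun i _ => hmonic i
  have hPn : P.natDegree = n := by
    rw [natDegree_prod _ _ fun i _ => (hmonic i).ne_zero, hn]
  let F : ℚ[X] := ∏ i, (X ^ δ i - 1)
  have hF : F.Monic := monic_prod_of_monic _ _ fun i _ => monic_X_pow_sub_C 1 (hδ i).ne'
  have hPF : P ∣ F.map (algebraMap ℚ K) := by
    simpa [F, Polynomial.map_prod] using Finset.prod_dvd_prod_of_dvd _ _ fun i _ => hdvd i
  obtain ⟨Q, hQ, hQF, hQP⟩ := exists_complex_monic_dvd_map_support_eq hF hP hPF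
  have hQn : Q.natDegree = n := by
    rw [← hPn, natDegree_eq_support_max' hQ.ne_zero, natDegree_eq_support_max' hP.ne_zero]
    simp_rw [hQP]
  obtain ⟨c, hc, hrev⟩ := Complex.exists_reverse_eq_C_mul_map_conj hQ fun r hr =>
    Complex.norm_eq_one_of_mem_roots_of_dvd_prod_X_pow_sub_one hδ
      (by simpa [F, Polynomial.map_prod] using hQF) hr
  simp_rw [← mem_support_iff, ← hQP, mem_support_iff, ← hQn]
  exact (coeff_natDegree_sub_ne_zero_iff_of_reverse_eq hc _ hrev (hQn ▸ hs)).symm
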